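/- arXiv:2401.13236 — 3 statements merged into one kernel-verified Lean document; each statement's English description precedes it below -/
import Mathlib

section
/- Let X be a measurable space, let P and Q be probability measures on X, and let h, f, g : X → ℝ be measurable functions with values in [0,1]. Then ∫ |h − f| dP ≤ ∫ |h − g| dQ + min( ∫ |g − f| dP , ∫ |g − f| dQ ) + d₁(P,Q). (This is the risk-decomposition form of Theorem 1: h is the learned predictor, f the true labeling function of client i's test distribution P, g the true labeling function of the group's training distribution Q, the middle term is the constant λ, and d₁ is the distribution divergence term.) -/
/-!
Pointwise, `|h - f| ≤ |h - g| + |g - f|`. Integrate this under `P` when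
`ε_P(g,f) ≤ ε_Q(g,f)`, and under `Q` otherwise. The remaining change of measure from `P` to `Q`
costs at most `d₁(P,Q)` for an integrand with values in `[0,1]`, since `∫ u dP - ∫ u dQ` is the
integral of `u` against the signed measure `P - Q`.
-/

open MeasureTheory

namespace MeasureTheory

open Set

variable {X : Type*} [MeasurableSpace X]

instance SignedMeasure.isFiniteMeasure_variation (s : SignedMeasure X) :
    IsFiniteMeasure (VectorMeasure.variation s) := by
  rw [← s.totalVariation_eq_variation, SignedMeasure.totalVariation]
  infer_instance

theorem norm_integral_sub_integral_le_totalVariation {G : Type*} [NormedAddCommGroup G]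
    [NormedSpace ℝ G] (P Q : Measure X) [IsFiniteMeasure P] [IsFiniteMeasure Q] {u : X → G}
    (huP : Integrable u P) (huQ : Integrable u Q) {C : ℝ} (hC : ∀ x, ‖u x‖ ≤ C) :
    ‖∫ x, u x ∂P - ∫ x, u x ∂Q‖ ≤
      C * (P.toSignedMeasure - Q.toSignedMeasure).totalVariation.real univ := by
  rcases isEmpty_or_nonempty X with hX | ⟨⟨x⟩⟩
  · simp [integral_of_isEmpty, univ_eq_empty_iff.mpr hX]
  rw [← VectorMeasure.integral_toSignedMeasure,
    ← VectorMeasure.integral_toSignedMeasure (μ := Q),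
    ← VectorMeasure.integral_sub_vectorMeasure
      (by rwa [VectorMeasure.Integrable, Measure.variation_toSignedMeasure])
      (by rwa [VectorMeasure.Integrable, Measure.variation_toSignedMeasure]),
    SignedMeasure.totalVariation_eq_variation]
  calc _ ≤ C * ‖(ContinuousLinearMap.lsmul ℝ ℝ).flip‖ * _ :=
        VectorMeasure.norm_integral_le_of_norm_le_const (ae_of_all _ hC)
    _ ≤ C * 1 * _ := by
        have hC0 : 0 ≤ C := (norm_nonneg _).trans (hC x)
        gcongr
        rw [ContinuousLinearMap.opNorm_flip]
        exact ContinuousLinearMap.opNorm_lsmul_le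
    _ = _ := by rw [mul_one]

theorem integral_abs_sub_le_add {μ : Measure X} {a b c : X → ℝ}
    (hab : Integrable (fun x ↦ a x - b x) μ) (hbc : Integrable (fun x ↦ b x - c x) μ) :
    ∫ x, |a x - c x| ∂μ ≤ ∫ x, |a x - b x| ∂μ + ∫ x, |b x - c x| ∂μ := by
  rw [← integral_add hab.abs hbc.abs]
  exact integral_mono_of_nonneg (ae_of_all _ fun _ ↦ abs_nonneg _) (hab.abs.add hbc.abs)
    (ae_of_all _ fun x ↦ abs_sub_le (a x) (b x) (c x))

theorem integral_le_integral_add_totalVariation (P Q : Measure X) [IsFiniteMeasure P]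
    [IsFiniteMeasure Q] {u : X → ℝ} (hu : Measurable u) (hu1 : ∀ x, |u x| ≤ 1) :
    ∫ x, u x ∂P ≤
      ∫ x, u x ∂Q + (P.toSignedMeasure - Q.toSignedMeasure).totalVariation.real univ := by
  have hint : ∀ μ : Measure X, [IsFiniteMeasure μ] → Integrable u μ := fun μ _ ↦
    .of_bound hu.aestronglyMeasurable 1 (ae_of_all _ hu1)
  have := norm_integral_sub_integral_le_totalVariation P Q (hint P) (hint Q) hu1
  rw [one_mul, Real.norm_eq_abs, abs_le] at this
  linarith [this.2]

end MeasureTheory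

/-- Risk-decomposition form of Theorem 1: for probability measures `P` (test distribution of
client `i`) and `Q` (training distribution of the group), learned predictor `h`, true labeling
functions `f` (of `P`) and `g` (of `Q`), all with values in `[0,1]`,
`ε_P(h,f) ≤ ε_Q(h,g) + min(ε_P(g,f), ε_Q(g,f)) + d₁(P,Q)`, where `d₁(P,Q)` is the total mass of
the total-variation measure of the signed measure `P - Q`. -/
theorem risk_decomposition
    {X : Type*} [MeasurableSpace X] (P Q : Measure X)
    [IsProbabilityMeasure P] [IsProbabilityMeasure Q]
    (h f g : X → ℝ) (hh : Measurable h) (hf : Measurable f) (hg : Measurable g)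
    (hh01 : ∀ x, h x ∈ Set.Icc (0 : ℝ) 1)
    (hf01 : ∀ x, f x ∈ Set.Icc (0 : ℝ) 1)
    (hg01 : ∀ x, g x ∈ Set.Icc (0 : ℝ) 1) :
    ∫ x, |h x - f x| ∂P ≤
      (∫ x, |h x - g x| ∂Q) +
        min (∫ x, |g x - f x| ∂P) (∫ x, |g x - f x| ∂Q) +
        ((P.toSignedMeasure - Q.toSignedMeasure).totalVariation Set.univ).toReal := by
  set d := ((P.toSignedMeasure - Q.toSignedMeasure).totalVariation Set.univ).toReal
  have hbound {a b : X → ℝ} (ha : ∀ x, a x ∈ Set.Icc (0 : ℝ) 1)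
      (hb : ∀ x, b x ∈ Set.Icc (0 : ℝ) 1) (x : X) : |a x - b x| ≤ 1 :=
    abs_sub_le_of_nonneg_of_le (ha x).1 (ha x).2 (hb x).1 (hb x).2
  have hint (μ : Measure X) [IsFiniteMeasure μ] {a b : X → ℝ} (ha : Measurable a)
      (hb : Measurable b) (ha01 : ∀ x, a x ∈ Set.Icc (0 : ℝ) 1)
      (hb01 : ∀ x, b x ∈ Set.Icc (0 : ℝ) 1) :
      Integrable (fun x ↦ a x - b x) μ :=
    .of_bound (ha.sub hb).aestronglyMeasurable 1 (ae_of_all _ (hbound ha01 hb01))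
  have hshift {a b : X → ℝ} (ha : Measurable a) (hb : Measurable b)
      (ha01 : ∀ x, a x ∈ Set.Icc (0 : ℝ) 1) (hb01 : ∀ x, b x ∈ Set.Icc (0 : ℝ) 1) :
      ∫ x, |a x - b x| ∂P ≤ ∫ x, |a x - b x| ∂Q + d :=
    integral_le_integral_add_totalVariation P Q (ha.sub hb).abs
      fun x ↦ (abs_abs _).trans_le (hbound ha01 hb01 x)
  rcases le_total (∫ x, |g x - f x| ∂P) (∫ x, |g x - f x| ∂Q) with hmin | hmin
  · calc ∫ x, |h x - f x| ∂P
        ≤ ∫ x, |h x - g x| ∂P + ∫ x, |g x - f x| ∂P :=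
          integral_abs_sub_le_add (hint P hh hg hh01 hg01) (hint P hg hf hg01 hf01)
      _ ≤ ∫ x, |h x - g x| ∂Q + d + ∫ x, |g x - f x| ∂P := by
          gcongr; exact hshift hh hg hh01 hg01
      _ = _ := by rw [min_eq_left hmin]; ring
  · calc ∫ x, |h x - f x| ∂P
        ≤ ∫ x, |h x - f x| ∂Q + d := hshift hh hf hh01 hf01
      _ ≤ ∫ x, |h x - g x| ∂Q + ∫ x, |g x - f x| ∂Q + d := by
          gcongr
          exact integral_abs_sub_le_add (hint Q hh hg hh01 hg01) (hint Q hg hf hg01 hf01)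
      _ = _ := by rw [min_eq_right hmin]
end

section
/- Let E = EuclideanSpace ℝ (Fin M) and let J_1, …, J_N : E → ℝ be differentiable with L-Lipschitz gradient. Suppose the clients {1, …, N} are partitioned into groups, with S_i denoting the group containing client i, and let a_j ≥ 0 be weights with Σ_{j ∈ S_i} a_j = 1 for each group. Fix current iterates w_1, …, w_N ∈ E and a step size η > 0. On a probability space, let g_1, …, g_N : Ω → E be measurable square-integrable random vectors with 𝔼[g_j] = ∇J_j(w_j) and 𝔼[‖g_j − ∇J_j(w_j)‖²] ≤ σ² for every j. Each client updates w_i⁺ = w_i − η Σ_{j ∈ S_i} a_j g_j. Then Σ_{i=1}^{N} 𝔼[J_i(w_i⁺)] − Σ_{i=1}^{N} J_i(w_i) ≤ − η Σ_{i=1}^{N} ⟨∇J_i(w_i), Σ_{j ∈ S_i} a_j ∇J_j(w_j)⟩ + (L η² / 2) Σ_{i=1}^{N} ‖Σ_{j ∈ S_i} a_j ∇J_j(w_j)‖² + (L η² N / 2) σ². (Lemma 1 of the paper: the one-epoch expected loss decay of all clients under grouped aggregation.) -/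
/-!
Client `i` takes a stochastic gradient step along `d = ∑_{j ∈ S i} a j • g j`, an unbiased
estimate of `D = ∑_{j ∈ S i} a j • ∇J_j(w_j)`. Integrating the `L`-smoothness inequality
`J(w - η d) ≤ J(w) - η ⟪∇J(w), d⟫ + L η² / 2 ‖d‖²` and splitting the second moment as
`𝔼‖d‖² = ‖D‖² + 𝔼‖d - D‖²`, it remains to bound the variance of `d`; by convexity of `‖·‖²`
the variance of a convex combination is at most `σ²`. Summing over the clients gives the claim.
-/

open MeasureTheory
open scoped RealInnerProductSpace

section

variable {F : Type*} [NormedAddCommGroup F] [InnerProductSpace ℝ F]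
  {Ω : Type*} [MeasurableSpace Ω] {P : Measure Ω}

theorem integral_norm_sum_smul_sub_sq_le [IsFiniteMeasure P] {ι : Type*} {s : Finset ι}
    {a : ι → ℝ} (ha : ∀ j ∈ s, 0 ≤ a j) (hsum : ∑ j ∈ s, a j = 1) {X : ι → Ω → F}
    (hX : ∀ j ∈ s, MemLp (X j) 2 P) (m : ι → F) {v : ℝ}
    (hv : ∀ j ∈ s, ∫ ω, ‖X j ω - m j‖ ^ 2 ∂P ≤ v) :
    ∫ ω, ‖∑ j ∈ s, a j • X j ω - ∑ j ∈ s, a j • m j‖ ^ 2 ∂P ≤ v := by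
  have hdev2 : ∀ j ∈ s, Integrable (fun ω => ‖X j ω - m j‖ ^ 2) P := fun j hj =>
    ((hX j hj).sub (memLp_const (m j))).integrable_norm_pow two_ne_zero
  have hjensen : ∀ ω, ‖∑ j ∈ s, a j • X j ω - ∑ j ∈ s, a j • m j‖ ^ 2 ≤
      ∑ j ∈ s, a j * ‖X j ω - m j‖ ^ 2 := fun ω => by
    rw [← Finset.sum_sub_distrib]
    simp_rw [← smul_sub]
    exact ((convexOn_norm convex_univ).pow (fun _ _ => norm_nonneg _) 2).map_sum_le ha hsum
      (fun _ _ => Set.mem_univ _)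
  calc ∫ ω, ‖∑ j ∈ s, a j • X j ω - ∑ j ∈ s, a j • m j‖ ^ 2 ∂P
      ≤ ∫ ω, ∑ j ∈ s, a j * ‖X j ω - m j‖ ^ 2 ∂P :=
        integral_mono_of_nonneg (ae_of_all _ fun _ => by positivity)
          (integrable_finsetSum _ fun j hj => (hdev2 j hj).const_mul (a j)) (ae_of_all _ hjensen)
    _ = ∑ j ∈ s, a j * ∫ ω, ‖X j ω - m j‖ ^ 2 ∂P := by
        rw [integral_finsetSum _ fun j hj => (hdev2 j hj).const_mul (a j)]
        simp_rw [integral_const_mul]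
    _ ≤ ∑ j ∈ s, a j * v :=
        Finset.sum_le_sum fun j hj => mul_le_mul_of_nonneg_left (hv j hj) (ha j hj)
    _ = v := by rw [← Finset.sum_mul, hsum, one_mul]

variable [CompleteSpace F] {f : F → ℝ} {L : ℝ}

theorem abs_sub_sub_inner_gradient_le (hf : Differentiable ℝ f)
    (hlip : ∀ x y, ‖gradient f x - gradient f y‖ ≤ L * ‖x - y‖) (x y : F) :
    |f y - f x - ⟪gradient f x, y - x⟫| ≤ L / 2 * ‖y - x‖ ^ 2 := by
  -- The remainder along `t ↦ x + t • v` has derivative bounded by `L t ‖v‖²`, the derivative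
  -- of `L t² ‖v‖² / 2`; the fencing theorem compares the two on `[0, 1]`.
  obtain ⟨v, rfl⟩ : ∃ v, y = x + v := ⟨y - x, (add_sub_cancel x y).symm⟩
  have hderiv : ∀ t : ℝ, HasDerivAt (fun t : ℝ => f (x + t • v) - f x - t * ⟪gradient f x, v⟫)
      ⟪gradient f (x + t • v) - gradient f x, v⟫ t := by
    intro t
    have hline : HasDerivAt (fun t : ℝ => x + t • v) v t := by
      simpa using ((hasDerivAt_id t).smul_const v).const_add x
    refine ((((hf _).hasGradientAt.hasFDerivAt.comp_hasDerivAt t hline).sub_const (f x)).sub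
      ((hasDerivAt_id t).mul_const ⟪gradient f x, v⟫)).congr_deriv ?_
    rw [inner_sub_left, one_mul]
    rfl
  have hbound : ∀ t ∈ Set.Ico (0 : ℝ) 1,
      ‖⟪gradient f (x + t • v) - gradient f x, v⟫‖ ≤ L * t * ‖v‖ ^ 2 := by
    intro t ht
    calc ‖⟪gradient f (x + t • v) - gradient f x, v⟫‖
        ≤ ‖gradient f (x + t • v) - gradient f x‖ * ‖v‖ := norm_inner_le_norm _ _
      _ ≤ L * ‖x + t • v - x‖ * ‖v‖ := by gcongr; exact hlip _ _
      _ = L * t * ‖v‖ ^ 2 := by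
        rw [add_sub_cancel_left, norm_smul, Real.norm_of_nonneg ht.1]
        ring
  have hB : ∀ t : ℝ, HasDerivAt (fun t : ℝ => L / 2 * t ^ 2 * ‖v‖ ^ 2) (L * t * ‖v‖ ^ 2) t := by
    intro t
    refine (((hasDerivAt_pow 2 t).const_mul (L / 2)).mul_const (‖v‖ ^ 2)).congr_deriv ?_
    simp only [Nat.cast_ofNat, Nat.add_one_sub_one, pow_one]
    ring
  simpa using image_norm_le_of_norm_deriv_right_le_deriv_boundary
    (fun t _ => (hderiv t).continuousAt.continuousWithinAt) (fun t _ => (hderiv t).hasDerivWithinAt)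
    (by simp) hB hbound (Set.right_mem_Icc.2 zero_le_one)

theorem integral_norm_sq_eq_norm_integral_sq_add [IsProbabilityMeasure P] {X : Ω → F}
    (hX : MemLp X 2 P) :
    ∫ ω, ‖X ω‖ ^ 2 ∂P = ‖∫ ω, X ω ∂P‖ ^ 2 + ∫ ω, ‖X ω - ∫ ω', X ω' ∂P‖ ^ 2 ∂P := by
  set m := ∫ ω, X ω ∂P
  have hdev : Integrable (fun ω => X ω - m) P := (hX.integrable one_le_two).sub (integrable_const m)
  have hdev2 : Integrable (fun ω => ‖X ω - m‖ ^ 2) P :=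
    (hX.sub (memLp_const m)).integrable_norm_pow two_ne_zero
  have hcross : Integrable (fun ω => 2 * ⟪m, X ω - m⟫) P := (hdev.const_inner m).const_mul 2
  have hlin : Integrable (fun ω => ‖m‖ ^ 2 + 2 * ⟪m, X ω - m⟫) P := (integrable_const _).add hcross
  have hpt : ∀ ω, ‖X ω‖ ^ 2 = ‖m‖ ^ 2 + 2 * ⟪m, X ω - m⟫ + ‖X ω - m‖ ^ 2 := fun ω => by
    simpa using norm_add_sq_real m (X ω - m)
  rw [integral_congr_ae (ae_of_all _ hpt), integral_add hlin hdev2,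
    integral_add (integrable_const _) hcross, integral_const_mul, integral_inner hdev,
    integral_sub (hX.integrable one_le_two) (integrable_const m)]
  simp [m]

theorem integral_comp_add_le [IsProbabilityMeasure P] (hf : Differentiable ℝ f)
    (hlip : ∀ x y, ‖gradient f x - gradient f y‖ ≤ L * ‖x - y‖) (x : F) {Y : Ω → F}
    (hY : MemLp Y 2 P) :
    ∫ ω, f (x + Y ω) ∂P ≤ f x + ⟪gradient f x, ∫ ω, Y ω ∂P⟫ + L / 2 * ∫ ω, ‖Y ω‖ ^ 2 ∂P := by
  have hYint : Integrable Y P := hY.integrable one_le_two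
  have hY2 : Integrable (fun ω => ‖Y ω‖ ^ 2) P := hY.integrable_norm_pow two_ne_zero
  have hlin : Integrable (fun ω => f x + ⟪gradient f x, Y ω⟫) P :=
    (integrable_const _).add (hYint.const_inner _)
  have hpt : ∀ ω, |f (x + Y ω) - (f x + ⟪gradient f x, Y ω⟫)| ≤ L / 2 * ‖Y ω‖ ^ 2 := fun ω => by
    simpa [sub_sub] using abs_sub_sub_inner_gradient_le hf hlip x (x + Y ω)
  have hrem : Integrable (fun ω => f (x + Y ω) - (f x + ⟪gradient f x, Y ω⟫)) P :=
    (hY2.const_mul (L / 2)).mono'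
      (((hf.continuous.comp (continuous_const_add x)).comp_aestronglyMeasurable hY.1).sub hlin.1)
      (ae_of_all _ hpt)
  calc ∫ ω, f (x + Y ω) ∂P ≤ ∫ ω, (f x + ⟪gradient f x, Y ω⟫ + L / 2 * ‖Y ω‖ ^ 2) ∂P :=
        integral_mono ((hrem.add hlin).congr (ae_of_all _ fun ω => sub_add_cancel _ _))
          (hlin.add (hY2.const_mul _))
          fun ω => by linarith [le_abs_self (f (x + Y ω) - (f x + ⟪gradient f x, Y ω⟫)), hpt ω]
    _ = f x + ⟪gradient f x, ∫ ω, Y ω ∂P⟫ + L / 2 * ∫ ω, ‖Y ω‖ ^ 2 ∂P := by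
        rw [integral_add hlin (hY2.const_mul _), integral_add (integrable_const _)
          (hYint.const_inner _), integral_const, integral_inner hYint, integral_const_mul]
        simp

theorem integral_comp_sub_smul_le [IsProbabilityMeasure P] (hf : Differentiable ℝ f)
    (hlip : ∀ x y, ‖gradient f x - gradient f y‖ ≤ L * ‖x - y‖) (hL : 0 ≤ L) (x : F) (η : ℝ)
    {X : Ω → F} (hX : MemLp X 2 P) {m : F} (hm : ∫ ω, X ω ∂P = m) {v : ℝ}
    (hv : ∫ ω, ‖X ω - m‖ ^ 2 ∂P ≤ v) :
    ∫ ω, f (x - η • X ω) ∂P ≤ f x - η * ⟪gradient f x, m⟫ + L * η ^ 2 / 2 * (‖m‖ ^ 2 + v) := by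
  have hmoment : ∫ ω, ‖X ω‖ ^ 2 ∂P ≤ ‖m‖ ^ 2 + v := by
    rw [integral_norm_sq_eq_norm_integral_sq_add hX, hm]
    linarith
  calc ∫ ω, f (x - η • X ω) ∂P = ∫ ω, f (x + -(η • X ω)) ∂P := by simp_rw [sub_eq_add_neg]
    _ ≤ f x + ⟪gradient f x, ∫ ω, -(η • X ω) ∂P⟫ + L / 2 * ∫ ω, ‖-(η • X ω)‖ ^ 2 ∂P :=
        integral_comp_add_le hf hlip x (hX.const_smul η).neg
    _ = f x - η * ⟪gradient f x, m⟫ + L * η ^ 2 / 2 * ∫ ω, ‖X ω‖ ^ 2 ∂P := by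
        simp only [integral_neg, integral_smul, hm, norm_neg, norm_smul, mul_pow, Real.norm_eq_abs,
          sq_abs, integral_const_mul, inner_neg_right, real_inner_smul_right]
        ring
    _ ≤ f x - η * ⟪gradient f x, m⟫ + L * η ^ 2 / 2 * (‖m‖ ^ 2 + v) := by
        gcongr

end

theorem lemma1_grouped_descent_general
    {M N : ℕ} (J : Fin N → EuclideanSpace ℝ (Fin M) → ℝ) (L : ℝ) (hL : 0 < L)
    (hdiff : ∀ i, Differentiable ℝ (J i))
    (hlip : ∀ i w₁ w₂, ‖gradient (J i) w₁ - gradient (J i) w₂‖ ≤ L * ‖w₁ - w₂‖)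
    (S : Fin N → Finset (Fin N))
    (a : Fin N → ℝ) (ha : ∀ j, 0 ≤ a j) (hsum : ∀ i, ∑ j ∈ S i, a j = 1)
    (w : Fin N → EuclideanSpace ℝ (Fin M)) (η : ℝ)
    {Ω : Type*} [MeasurableSpace Ω] (P : Measure Ω) [IsProbabilityMeasure P]
    (g : Fin N → Ω → EuclideanSpace ℝ (Fin M))
    (hg2 : ∀ j, MemLp (g j) 2 P)
    (hmean : ∀ j, (∫ ω, g j ω ∂P) = gradient (J j) (w j))
    (σ : ℝ)
    (hvar : ∀ j, (∫ ω, ‖g j ω - gradient (J j) (w j)‖ ^ 2 ∂P) ≤ σ ^ 2) :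
    (∑ i, ∫ ω, J i (w i - η • ∑ j ∈ S i, a j • g j ω) ∂P) - ∑ i, J i (w i) ≤
      -η * (∑ i, ⟪gradient (J i) (w i), ∑ j ∈ S i, a j • gradient (J j) (w j)⟫)
        + L * η ^ 2 / 2 * ∑ i, ‖∑ j ∈ S i, a j • gradient (J j) (w j)‖ ^ 2
        + L * η ^ 2 * N / 2 * σ ^ 2 := by
  have step : ∀ i, ∫ ω, J i (w i - η • ∑ j ∈ S i, a j • g j ω) ∂P ≤
      J i (w i) - η * ⟪gradient (J i) (w i), ∑ j ∈ S i, a j • gradient (J j) (w j)⟫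
        + L * η ^ 2 / 2 * (‖∑ j ∈ S i, a j • gradient (J j) (w j)‖ ^ 2 + σ ^ 2) := by
    intro i
    refine integral_comp_sub_smul_le (hdiff i) (hlip i) hL.le (w i) η
      (memLp_finsetSum _ fun j _ => (hg2 j).const_smul (a j)) ?_
      (integral_norm_sum_smul_sub_sq_le (fun j _ => ha j) (hsum i) (fun j _ => hg2 j) _
        fun j _ => hvar j)
    rw [integral_finsetSum _ fun j _ => ((hg2 j).integrable one_le_two).smul (a j)]
    simp_rw [Pi.smul_apply, integral_smul, hmean]
  calc _ ≤ ∑ i, (J i (w i) - η * ⟪gradient (J i) (w i), ∑ j ∈ S i, a j • gradient (J j) (w j)⟫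
          + L * η ^ 2 / 2 * (‖∑ j ∈ S i, a j • gradient (J j) (w j)‖ ^ 2 + σ ^ 2))
          - ∑ i, J i (w i) := by
        gcongr with i
        exact step i
    _ = _ := by
        simp only [Finset.sum_add_distrib, Finset.sum_sub_distrib, mul_add, ← Finset.mul_sum,
          Finset.sum_const, Finset.card_univ, Fintype.card_fin, nsmul_eq_mul]
        ring

/-- Lemma 1 of the paper: one-epoch expected loss decay of all clients under grouped
aggregation.  Clients `1, …, N` with `L`-smooth losses `J i` are partitioned into groups
(`S i` is the group of client `i`), weights `a j ≥ 0` sum to `1` over each group, and each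
client updates `wᵢ⁺ = wᵢ − η Σ_{j ∈ S i} a j g j`, where `g j` is an unbiased square-integrable
stochastic gradient of client `j` at `w j` with variance at most `σ²`.  Then the sum of expected
losses decays as stated. -/
theorem lemma1_grouped_descent
    {M N : ℕ} (J : Fin N → EuclideanSpace ℝ (Fin M) → ℝ) (L : ℝ) (hL : 0 < L)
    (hdiff : ∀ i, Differentiable ℝ (J i))
    (hlip : ∀ i w₁ w₂, ‖gradient (J i) w₁ - gradient (J i) w₂‖ ≤ L * ‖w₁ - w₂‖)
    (S : Fin N → Finset (Fin N)) (hself : ∀ i, i ∈ S i)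
    (hpart : ∀ i j, j ∈ S i → S j = S i)
    (a : Fin N → ℝ) (ha : ∀ j, 0 ≤ a j) (hsum : ∀ i, ∑ j ∈ S i, a j = 1)
    (w : Fin N → EuclideanSpace ℝ (Fin M)) (η : ℝ) (hη : 0 < η)
    {Ω : Type*} [MeasurableSpace Ω] (P : Measure Ω) [IsProbabilityMeasure P]
    (g : Fin N → Ω → EuclideanSpace ℝ (Fin M))
    (hgmeas : ∀ j, Measurable (g j)) (hg2 : ∀ j, MemLp (g j) 2 P)
    (hmean : ∀ j, (∫ ω, g j ω ∂P) = gradient (J j) (w j))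
    (σ : ℝ) (hσ : 0 ≤ σ)
    (hvar : ∀ j, (∫ ω, ‖g j ω - gradient (J j) (w j)‖ ^ 2 ∂P) ≤ σ ^ 2) :
    (∑ i, ∫ ω, J i (w i - η • ∑ j ∈ S i, a j • g j ω) ∂P) - ∑ i, J i (w i) ≤
      -η * (∑ i, ⟪gradient (J i) (w i), ∑ j ∈ S i, a j • gradient (J j) (w j)⟫)
        + L * η ^ 2 / 2 * ∑ i, ‖∑ j ∈ S i, a j • gradient (J j) (w j)‖ ^ 2
        + L * η ^ 2 * N / 2 * σ ^ 2 :=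
  lemma1_grouped_descent_general J L hL hdiff hlip S a ha hsum w η P g hg2 hmean σ hvar
end

section
/- Let E = EuclideanSpace ℝ (Fin M). Fix scalars η_0, …, η_{t−1} ≥ 0, deterministic drift vectors u_s, u_s' ∈ E with ‖u_s − u_s'‖ ≤ κ_s for each s < t, and on a probability space let ξ_0, ξ_0', …, ξ_{t−1}, ξ_{t−1}' : Ω → E be square-integrable random vectors such that 𝔼[ξ_s] = 𝔼[ξ_s'] = 0, 𝔼[‖ξ_s‖²] ≤ σ² and 𝔼[‖ξ_s'‖²] ≤ σ², and the differences ζ_s := ξ_s − ξ_s' (s = 0, …, t−1) are independent. Define two iterate sequences from a common initialization w⁰ = w'⁰ ∈ E by w^{s+1} = w^s − η_s (u_s + ξ_s) and w'^{s+1} = w'^s − η_s (u_s' + ξ_s'). Then 𝔼[ ‖w^t − w'^t‖² ] ≤ 2 (Σ_{s=0}^{t−1} η_s κ_s)² + 8 Σ_{s=0}^{t−1} η_s² σ². (A corrected form of inequality (39): the divergence between two clients' model iterates is controlled by the accumulated gradient dissimilarity κ_s and the accumulated stochastic-gradient variance σ².) -/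
/-!
The two recursions telescope to `w^t − w'^t = −(D + Z)`, with deterministic drift part
`D = Σ η_s (u_s − u_s')`, of norm at most `Σ η_s κ_s`, and noise part `Z = Σ η_s ζ_s`.
Since the `ζ_s` are independent with mean zero, the cross terms `𝔼⟪ζ_i, ζ_j⟫ = ⟪𝔼ζ_i, 𝔼ζ_j⟫`
vanish, so `𝔼‖Z‖² = Σ η_s² 𝔼‖ζ_s‖² ≤ 4 Σ η_s² σ²`; then use `‖D + Z‖² ≤ 2‖D‖² + 2‖Z‖²`.
-/

open MeasureTheory ProbabilityTheory Finset
open scoped RealInnerProductSpace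

theorem sub_eq_neg_sum_sub_of_steps {G : Type*} [AddCommGroup G] {t : ℕ} {a b d d' : ℕ → G}
    (h0 : a 0 = b 0) (ha : ∀ s < t, a (s + 1) = a s - d s)
    (hb : ∀ s < t, b (s + 1) = b s - d' s) :
    a t - b t = -∑ s ∈ range t, (d s - d' s) := by
  have htelescope := sum_range_sub (fun n => a n - b n) t
  rw [h0, sub_self, sub_zero] at htelescope
  rw [← htelescope, ← sum_neg_distrib]
  refine sum_congr rfl fun s hs => ?_
  rw [ha s (mem_range.1 hs), hb s (mem_range.1 hs)]
  abel

theorem norm_sum_smul_le_sum_mul {ι F : Type*} [SeminormedAddCommGroup F] [NormedSpace ℝ F]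
    {s : Finset ι} {c κ : ι → ℝ} {v : ι → F} (hc : ∀ i ∈ s, 0 ≤ c i)
    (hv : ∀ i ∈ s, ‖v i‖ ≤ κ i) : ‖∑ i ∈ s, c i • v i‖ ≤ ∑ i ∈ s, c i * κ i :=
  (norm_sum_le _ _).trans <| sum_le_sum fun i hi => by
    rw [norm_smul, Real.norm_of_nonneg (hc i hi)]
    exact mul_le_mul_of_nonneg_left (hv i hi) (hc i hi)

section

variable {Ω E : Type*} [MeasurableSpace Ω] {μ : Measure Ω} [NormedAddCommGroup E]

theorem integral_norm_add_sq_le {f g : Ω → E} (hf : MemLp f 2 μ) (hg : MemLp g 2 μ) :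
    ∫ ω, ‖f ω + g ω‖ ^ 2 ∂μ ≤ 2 * ∫ ω, ‖f ω‖ ^ 2 ∂μ + 2 * ∫ ω, ‖g ω‖ ^ 2 ∂μ := by
  have hf2 := (memLp_two_iff_integrable_sq_norm hf.1).1 hf
  have hg2 := (memLp_two_iff_integrable_sq_norm hg.1).1 hg
  rw [← integral_const_mul, ← integral_const_mul, ← integral_add (hf2.const_mul 2)
    (hg2.const_mul 2)]
  refine integral_mono ((memLp_two_iff_integrable_sq_norm (hf.add hg).1).1 (hf.add hg))
    ((hf2.const_mul 2).add (hg2.const_mul 2)) fun ω => ?_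
  calc ‖f ω + g ω‖ ^ 2 ≤ (‖f ω‖ + ‖g ω‖) ^ 2 :=
        pow_le_pow_left₀ (norm_nonneg _) (norm_add_le _ _) 2
    _ ≤ 2 * ‖f ω‖ ^ 2 + 2 * ‖g ω‖ ^ 2 := by linarith [add_sq_le (a := ‖f ω‖) (b := ‖g ω‖)]

theorem integral_norm_sub_sq_le {f g : Ω → E} (hf : MemLp f 2 μ) (hg : MemLp g 2 μ) :
    ∫ ω, ‖f ω - g ω‖ ^ 2 ∂μ ≤ 2 * ∫ ω, ‖f ω‖ ^ 2 ∂μ + 2 * ∫ ω, ‖g ω‖ ^ 2 ∂μ := by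
  simpa only [sub_eq_add_neg, Pi.neg_apply, norm_neg] using integral_norm_add_sq_le hf hg.neg

variable [InnerProductSpace ℝ E]

theorem MeasureTheory.MemLp.integrable_inner {f g : Ω → E} (hf : MemLp f 2 μ)
    (hg : MemLp g 2 μ) : Integrable (fun ω => ⟪f ω, g ω⟫) μ :=
  (L2.integrable_inner (𝕜 := ℝ) (hf.toLp f) (hg.toLp g)).congr <| by
    filter_upwards [hf.coeFn_toLp, hg.coeFn_toLp] with ω hfω hgω
    rw [hfω, hgω]

variable [CompleteSpace E] [MeasurableSpace E] [BorelSpace E]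

theorem ProbabilityTheory.IndepFun.integral_inner {X Y : Ω → E} (hXY : X ⟂ᵢ[μ] Y)
    (hX : Integrable X μ) (hY : Integrable Y μ) :
    ∫ ω, ⟪X ω, Y ω⟫ ∂μ = ⟪μ[X], μ[Y]⟫ :=
  hXY.integral_bilin hX hY (innerSL ℝ)

theorem integral_norm_sum_sq_of_indepFun [IsFiniteMeasure μ] {ι : Type*} {X : ι → Ω → E}
    {s : Finset ι}
    (h2 : ∀ i ∈ s, MemLp (X i) 2 μ) (h0 : ∀ i ∈ s, μ[X i] = 0)
    (hindep : (s : Set ι).Pairwise fun i j => X i ⟂ᵢ[μ] X j) :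
    ∫ ω, ‖∑ i ∈ s, X i ω‖ ^ 2 ∂μ = ∑ i ∈ s, ∫ ω, ‖X i ω‖ ^ 2 ∂μ := by
  have hint : ∀ i ∈ s, ∀ j ∈ s, Integrable (fun ω => ⟪X i ω, X j ω⟫) μ :=
    fun i hi j hj => (h2 i hi).integrable_inner (h2 j hj)
  have hcross : ∀ i ∈ s, ∀ j ∈ s, j ≠ i → ∫ ω, ⟪X i ω, X j ω⟫ ∂μ = 0 := fun i hi j hj hji => by
    rw [(hindep hi hj hji.symm).integral_inner ((h2 i hi).integrable one_le_two)
      ((h2 j hj).integrable one_le_two), h0 i hi, inner_zero_left]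
  calc ∫ ω, ‖∑ i ∈ s, X i ω‖ ^ 2 ∂μ
      = ∑ i ∈ s, ∑ j ∈ s, ∫ ω, ⟪X i ω, X j ω⟫ ∂μ := by
        simp_rw [← real_inner_self_eq_norm_sq, sum_inner, inner_sum]
        rw [integral_finsetSum _ fun i hi => integrable_finsetSum _ (hint i hi)]
        exact sum_congr rfl fun i hi => integral_finsetSum _ (hint i hi)
    _ = ∑ i ∈ s, ∫ ω, ⟪X i ω, X i ω⟫ ∂μ :=
        sum_congr rfl fun i hi => sum_eq_single_of_mem i hi (hcross i hi)
    _ = ∑ i ∈ s, ∫ ω, ‖X i ω‖ ^ 2 ∂μ := by simp_rw [real_inner_self_eq_norm_sq]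

theorem integral_norm_sum_smul_sq_of_indepFun [IsFiniteMeasure μ] {ι : Type*}
    {X : ι → Ω → E} {s : Finset ι} (c : ι → ℝ)
    (h2 : ∀ i ∈ s, MemLp (X i) 2 μ) (h0 : ∀ i ∈ s, μ[X i] = 0)
    (hindep : (s : Set ι).Pairwise fun i j => X i ⟂ᵢ[μ] X j) :
    ∫ ω, ‖∑ i ∈ s, c i • X i ω‖ ^ 2 ∂μ = ∑ i ∈ s, c i ^ 2 * ∫ ω, ‖X i ω‖ ^ 2 ∂μ := by
  rw [integral_norm_sum_sq_of_indepFun (X := fun i ω => c i • X i ω)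
    (fun i hi => (h2 i hi).const_smul (c i))
    (fun i hi => by rw [integral_smul, h0 i hi, smul_zero])
    (hindep.mono' fun i j h => h.comp (by fun_prop) (by fun_prop))]
  simp_rw [norm_smul, mul_pow, Real.norm_eq_abs, sq_abs, integral_const_mul]

end

theorem iterate_divergence_bound_general
    {M t : ℕ} {Ω : Type*} [MeasurableSpace Ω] (P : Measure Ω) [IsProbabilityMeasure P]
    (η κ : ℕ → ℝ) (hη : ∀ s < t, 0 ≤ η s)
    (u u' : ℕ → EuclideanSpace ℝ (Fin M))
    (hdrift : ∀ s < t, ‖u s - u' s‖ ≤ κ s)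
    (ξ ξ' : ℕ → Ω → EuclideanSpace ℝ (Fin M))
    (σ : ℝ)
    (h2 : ∀ s < t, MemLp (ξ s) 2 P ∧ MemLp (ξ' s) 2 P)
    (hmean : ∀ s < t, (∫ ω, ξ s ω ∂P) = 0 ∧ (∫ ω, ξ' s ω ∂P) = 0)
    (hvar : ∀ s < t, (∫ ω, ‖ξ s ω‖ ^ 2 ∂P) ≤ σ ^ 2 ∧ (∫ ω, ‖ξ' s ω‖ ^ 2 ∂P) ≤ σ ^ 2)
    (hindep : iIndepFun
      (fun s : Fin t => fun ω => ξ s ω - ξ' s ω) P)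
    (w0 : EuclideanSpace ℝ (Fin M))
    (w w' : ℕ → Ω → EuclideanSpace ℝ (Fin M))
    (hw0 : ∀ ω, w 0 ω = w0) (hw0' : ∀ ω, w' 0 ω = w0)
    (hstep : ∀ s < t, ∀ ω, w (s + 1) ω = w s ω - η s • (u s + ξ s ω))
    (hstep' : ∀ s < t, ∀ ω, w' (s + 1) ω = w' s ω - η s • (u' s + ξ' s ω)) :
    (∫ ω, ‖w t ω - w' t ω‖ ^ 2 ∂P) ≤
      2 * (∑ s ∈ Finset.range t, η s * κ s) ^ 2 +
        8 * ∑ s ∈ Finset.range t, η s ^ 2 * σ ^ 2 := by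
  simp only [← mem_range] at hη hdrift h2 hmean hvar
  set ζ : ℕ → Ω → EuclideanSpace ℝ (Fin M) := fun s ω => ξ s ω - ξ' s ω
  set D := ∑ s ∈ range t, η s • (u s - u' s)
  set Z := fun ω => ∑ s ∈ range t, η s • ζ s ω
  have hdiff : ∀ ω, ‖w t ω - w' t ω‖ = ‖D + Z ω‖ := fun ω => by
    rw [sub_eq_neg_sum_sub_of_steps (a := (w · ω)) (b := (w' · ω)) ((hw0 ω).trans (hw0' ω).symm)
      (fun s hs => hstep s hs ω) (fun s hs => hstep' s hs ω), norm_neg, ← sum_add_distrib]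
    refine congrArg norm (sum_congr rfl fun s _ => ?_)
    simp only [ζ, ← smul_add, ← smul_sub]
    abel_nf
  have hζ2 : ∀ s ∈ range t, MemLp (ζ s) 2 P := fun s hs => (h2 s hs).1.sub (h2 s hs).2
  have hζmean : ∀ s ∈ range t, P[ζ s] = 0 := fun s hs => by
    rw [integral_sub ((h2 s hs).1.integrable one_le_two) ((h2 s hs).2.integrable one_le_two),
      (hmean s hs).1, (hmean s hs).2, sub_zero]
  have hZ : ∫ ω, ‖Z ω‖ ^ 2 ∂P ≤ 4 * ∑ s ∈ range t, η s ^ 2 * σ ^ 2 := by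
    rw [integral_norm_sum_smul_sq_of_indepFun η hζ2 hζmean fun i hi j hj hij =>
      hindep.indepFun (i := ⟨i, mem_range.1 hi⟩) (j := ⟨j, mem_range.1 hj⟩)
        (Fin.ne_of_val_ne hij), mul_sum]
    refine sum_le_sum fun s hs => ?_
    nlinarith [integral_norm_sub_sq_le (h2 s hs).1 (h2 s hs).2, hvar s hs, sq_nonneg (η s)]
  calc ∫ ω, ‖w t ω - w' t ω‖ ^ 2 ∂P = ∫ ω, ‖D + Z ω‖ ^ 2 ∂P := by simp_rw [hdiff]
    _ ≤ 2 * ∫ _, ‖D‖ ^ 2 ∂P + 2 * ∫ ω, ‖Z ω‖ ^ 2 ∂P :=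
        integral_norm_add_sq_le (memLp_const D)
          (memLp_finsetSum _ fun s hs => (hζ2 s hs).const_smul (η s))
    _ ≤ _ := by
        rw [integral_const, probReal_univ, one_smul]
        linarith [pow_le_pow_left₀ (norm_nonneg D) (norm_sum_smul_le_sum_mul hη hdrift) 2]

/-- A corrected form of inequality (39): two clients' SGD iterates start from the same
initialization `w⁰` and evolve by `w^{s+1} = w^s − η_s (u_s + ξ_s)` and
`w'^{s+1} = w'^s − η_s (u_s' + ξ_s')`, where the deterministic drifts satisfy
`‖u_s − u_s'‖ ≤ κ_s`, the noises are zero-mean with second moment at most `σ²`, and the noise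
differences `ξ_s − ξ_s'` are independent across iterations.  Then the divergence of the iterates
satisfies `𝔼[‖w^t − w'^t‖²] ≤ 2 (Σ_s η_s κ_s)² + 8 Σ_s η_s² σ²`. -/
theorem iterate_divergence_bound
    {M t : ℕ} {Ω : Type*} [MeasurableSpace Ω] (P : Measure Ω) [IsProbabilityMeasure P]
    (η κ : ℕ → ℝ) (hη : ∀ s < t, 0 ≤ η s)
    (u u' : ℕ → EuclideanSpace ℝ (Fin M))
    (hdrift : ∀ s < t, ‖u s - u' s‖ ≤ κ s)
    (ξ ξ' : ℕ → Ω → EuclideanSpace ℝ (Fin M))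
    (σ : ℝ) (hσ : 0 ≤ σ)
    (h2 : ∀ s < t, MemLp (ξ s) 2 P ∧ MemLp (ξ' s) 2 P)
    (hmean : ∀ s < t, (∫ ω, ξ s ω ∂P) = 0 ∧ (∫ ω, ξ' s ω ∂P) = 0)
    (hvar : ∀ s < t, (∫ ω, ‖ξ s ω‖ ^ 2 ∂P) ≤ σ ^ 2 ∧ (∫ ω, ‖ξ' s ω‖ ^ 2 ∂P) ≤ σ ^ 2)
    (hindep : iIndepFun
      (fun s : Fin t => fun ω => ξ s ω - ξ' s ω) P)
    (w0 : EuclideanSpace ℝ (Fin M))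
    (w w' : ℕ → Ω → EuclideanSpace ℝ (Fin M))
    (hw0 : ∀ ω, w 0 ω = w0) (hw0' : ∀ ω, w' 0 ω = w0)
    (hstep : ∀ s < t, ∀ ω, w (s + 1) ω = w s ω - η s • (u s + ξ s ω))
    (hstep' : ∀ s < t, ∀ ω, w' (s + 1) ω = w' s ω - η s • (u' s + ξ' s ω)) :
    (∫ ω, ‖w t ω - w' t ω‖ ^ 2 ∂P) ≤
      2 * (∑ s ∈ Finset.range t, η s * κ s) ^ 2 +
        8 * ∑ s ∈ Finset.range t, η s ^ 2 * σ ^ 2 :=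
  iterate_divergence_bound_general P η κ hη u u' hdrift ξ ξ' σ h2 hmean hvar hindep w0 w w' hw0 hw0'
    hstep hstep'
end
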